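/- arXiv:1108.2825 — 4 statements merged into one kernel-verified Lean document; each statement's English description precedes it below -/
import Mathlib

section
/- Let α ∈ (0,∞) be non-integer, n = ⌊α⌋ + 1, and let x : (0,∞) → ℝ be a non-constant T-periodic function of class C^n (T > 0). Then the Caputo fractional derivative of x of order α, defined by (C_D^α x)(t) = (1/Γ(n-α)) ∫₀^t (t-s)^{n-α-1} x^(n)(s) ds, is not a T-periodic function. -/
/-!
Write `g = x⁽ⁿ⁾` and `q = n - α - 1 ∈ (-1, 0)`. If the Caputo derivative were `T`-periodic,
splitting `∫₀^{t+T}` at `T` and using the periodicity of `g` would give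
`∫₀^T (τ - s)^q g(s) ds = 0` for every `τ > T`. Differentiating `k` times in `τ` (the factors
`q - j` never vanish because `q ∉ ℕ`) gives `∫₀^T (τ - s)^(q-k) g(s) ds = 0`: all moments of
`(τ - s)^q g(s)` against powers of the injective function `(τ - s)⁻¹` vanish, so by
Stone–Weierstrass `g = 0` on `[0, T]`, hence on `(0, ∞)`. A periodic function with vanishing
`n`-th derivative is constant.
-/

open Set MeasureTheory intervalIntegral Polynomial Topology
open scoped Interval

theorem exists_polynomial_comp_near_of_injOn {a b ε : ℝ} {f φ : ℝ → ℝ}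
    (hf : ContinuousOn f (Icc a b)) (hφ : ContinuousOn φ (Icc a b))
    (hφ_inj : InjOn φ (Icc a b)) (hε : 0 < ε) :
    ∃ P : ℝ[X], ∀ s ∈ Icc a b, |P.eval (φ s) - f s| < ε := by
  let φ' : C(Icc a b, ℝ) := ⟨(Icc a b).domRestrict φ, hφ.domRestrict⟩
  have hsep : (aeval (R := ℝ) φ').range.SeparatesPoints := by
    intro s t hst
    exact ⟨φ', ⟨φ', ⟨X, aeval_X φ'⟩, rfl⟩, fun h => hst (Subtype.ext (hφ_inj s.2 t.2 h))⟩
  obtain ⟨⟨g, P, rfl⟩, hg⟩ := ContinuousMap.exists_mem_subalgebra_near_continuous_of_separatesPoints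
    _ hsep _ hf.domRestrict ε hε
  exact ⟨P, fun s hs => by simpa [φ'] using hg ⟨s, hs⟩⟩

theorem eqOn_zero_of_integral_sq_eq_zero {a b : ℝ} (hab : a < b) {ψ : ℝ → ℝ}
    (hψ : ContinuousOn ψ (Icc a b)) (h : ∫ s in a..b, ψ s ^ 2 = 0) : EqOn ψ 0 (Icc a b) := by
  rw [integral_eq_zero_iff_of_le_of_nonneg_ae hab.le (ae_of_all _ fun s => sq_nonneg _)
    ((hψ.pow 2).intervalIntegrable_of_Icc hab.le), Measure.restrict_congr_set Ioc_ae_eq_Icc] at h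
  intro s hs
  simpa using Measure.eqOn_Icc_of_ae_eq volume hab.ne h (hψ.pow 2) continuousOn_const hs

theorem eqOn_zero_of_integral_mul_pow_eq_zero {a b : ℝ} (hab : a < b) {ψ φ : ℝ → ℝ}
    (hψ : ContinuousOn ψ (Icc a b)) (hφ : ContinuousOn φ (Icc a b))
    (hφ_inj : InjOn φ (Icc a b)) (h : ∀ k : ℕ, ∫ s in a..b, ψ s * φ s ^ k = 0) :
    EqOn ψ 0 (Icc a b) := by
  have hint : ∀ P : ℝ[X], IntervalIntegrable (fun s => ψ s * P.eval (φ s)) volume a b :=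
    fun P => (hψ.mul (P.continuous.comp_continuousOn hφ)).intervalIntegrable_of_Icc hab.le
  have hpoly : ∀ P : ℝ[X], ∫ s in a..b, ψ s * P.eval (φ s) = 0 := by
    intro P
    induction P using Polynomial.induction_on' with
    | add P Q hP hQ =>
      simp only [eval_add, mul_add]
      rw [integral_add (hint P) (hint Q), hP, hQ, add_zero]
    | monomial k c =>
      simp only [eval_monomial, mul_left_comm _ c, intervalIntegral.integral_const_mul, h, mul_zero]
  obtain ⟨M, hM⟩ := isCompact_Icc.exists_bound_of_continuousOn hψ
  refine eqOn_zero_of_integral_sq_eq_zero hab hψ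
    (abs_nonpos_iff.mp (le_of_forall_pos_le_add fun ε hε => ?_))
  have hMb : 0 < (|M| + 1) * (b - a) := by have := sub_pos.2 hab; positivity
  obtain ⟨P, hP⟩ := exists_polynomial_comp_near_of_injOn hψ hφ hφ_inj (div_pos hε hMb)
  have hsplit : ∫ s in a..b, ψ s ^ 2 = ∫ s in a..b, ψ s * (ψ s - P.eval (φ s)) := by
    simp only [mul_sub, ← sq]
    rw [integral_sub (f := fun s => ψ s ^ 2) ((hψ.pow 2).intervalIntegrable_of_Icc hab.le)
      (hint P), hpoly, sub_zero]
  rw [hsplit, zero_add, ← Real.norm_eq_abs]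
  calc ‖∫ s in a..b, ψ s * (ψ s - P.eval (φ s))‖
      ≤ ((|M| + 1) * (ε / ((|M| + 1) * (b - a)))) * |b - a| := by
        refine norm_integral_le_of_norm_le_const fun s hs => ?_
        have hs : s ∈ Icc a b := Ioc_subset_Icc_self (uIoc_of_le hab.le ▸ hs)
        rw [norm_mul, Real.norm_eq_abs, Real.norm_eq_abs, abs_sub_comm]
        exact mul_le_mul ((hM s hs).trans (le_abs_self M) |>.trans (by linarith)) (hP s hs).le
          (abs_nonneg _) (by positivity)
    _ = ε := by
        have := (sub_pos.2 hab).ne'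
        rw [abs_of_pos (sub_pos.2 hab)]; field_simp

theorem continuousOn_rpow_sub_mul {a b τ r : ℝ} {y : ℝ → ℝ} (hτ : b < τ)
    (hy : ContinuousOn y (Icc a b)) : ContinuousOn (fun s => (τ - s) ^ r * y s) (Icc a b) :=
  ((continuousOn_const.sub continuousOn_id).rpow_const
    fun _ hs => Or.inl (sub_ne_zero.2 (hs.2.trans_lt hτ).ne')).mul hy

theorem hasDerivAt_integral_rpow_sub_mul {a b p τ₀ : ℝ} {y : ℝ → ℝ} (hab : a ≤ b) (hτ₀ : b < τ₀)
    (hy : ContinuousOn y (Icc a b)) :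
    HasDerivAt (fun τ => ∫ s in a..b, (τ - s) ^ p * y s)
      (∫ s in a..b, p * (τ₀ - s) ^ (p - 1) * y s) τ₀ := by
  obtain ⟨c, hbc, hcτ₀⟩ := exists_between hτ₀
  have hU : Ioo c (τ₀ + 1) ∈ 𝓝 τ₀ := Ioo_mem_nhds hcτ₀ (lt_add_one τ₀)
  have hpos : ∀ τ ∈ Icc c (τ₀ + 1), ∀ s ∈ Icc a b, 0 < τ - s := fun τ hτ s hs => by
    linarith [hτ.1, hs.2]
  obtain ⟨B, hB⟩ := (isCompact_Icc.prod isCompact_Icc).exists_bound_of_continuousOn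
    (f := fun z : ℝ × ℝ => p * (z.1 - z.2) ^ (p - 1) * y z.2)
    (s := Icc c (τ₀ + 1) ×ˢ Icc a b)
    ((continuousOn_const.mul ((continuousOn_fst.sub continuousOn_snd).rpow_const
      fun z hz => Or.inl (hpos _ hz.1 _ hz.2).ne')).mul (hy.comp continuousOn_snd fun z hz => hz.2))
  have hIcc : Ι a b ⊆ Icc a b := uIoc_of_le hab ▸ Ioc_subset_Icc_self
  refine (hasDerivAt_integral_of_dominated_loc_of_deriv_le (bound := fun _ => B) hU ?_
    ((continuousOn_rpow_sub_mul hτ₀ hy).intervalIntegrable_of_Icc hab) ?_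
    (ae_of_all _ fun s hs τ hτ => hB (τ, s) ⟨Ioo_subset_Icc_self hτ, hIcc hs⟩)
    intervalIntegrable_const (ae_of_all _ fun s hs τ hτ => ?_)).2
  · filter_upwards [hU] with τ hτ
    exact ((continuousOn_rpow_sub_mul (hbc.trans hτ.1) hy).mono hIcc).aestronglyMeasurable
      measurableSet_uIoc
  · have hF' : ContinuousOn (fun s => p * (τ₀ - s) ^ (p - 1) * y s) (Icc a b) :=
      (continuousOn_const.mul (continuousOn_rpow_sub_mul (r := p - 1) hτ₀ hy)).congr
        fun s _ => mul_assoc p _ (y s)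
    exact (hF'.mono hIcc).aestronglyMeasurable measurableSet_uIoc
  · have := (((hasDerivAt_id τ).sub_const s).rpow_const (p := p)
      (Or.inl (hpos τ (Ioo_subset_Icc_self hτ) s (hIcc hs)).ne')).mul_const (y s)
    simpa using this

theorem integral_rpow_sub_sub_natCast_mul_eq_zero {a b p : ℝ} {y : ℝ → ℝ} (hab : a ≤ b)
    (hp : ∀ k : ℕ, p ≠ k) (hy : ContinuousOn y (Icc a b))
    (h : ∀ τ > b, ∫ s in a..b, (τ - s) ^ p * y s = 0) (k : ℕ) :
    ∀ τ > b, ∫ s in a..b, (τ - s) ^ (p - k) * y s = 0 := by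
  induction k with
  | zero => simpa using h
  | succ k ih =>
    intro τ hτ
    have hloc : (fun σ => ∫ s in a..b, (σ - s) ^ (p - k) * y s) =ᶠ[𝓝 τ] fun _ => 0 :=
      eventually_gt_nhds hτ |>.mono ih
    have hderiv := (hasDerivAt_integral_rpow_sub_mul hab hτ hy).unique
      ((hasDerivAt_const τ 0).congr_of_eventuallyEq hloc)
    simp only [mul_assoc, intervalIntegral.integral_const_mul, sub_sub] at hderiv
    rw [Nat.cast_succ]
    exact (mul_eq_zero.1 hderiv).resolve_left (sub_ne_zero.2 (hp k))

theorem eqOn_zero_of_integral_rpow_sub_mul_eq_zero {a b p : ℝ} {y : ℝ → ℝ} (hab : a < b)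
    (hp : ∀ k : ℕ, p ≠ k) (hy : ContinuousOn y (Icc a b))
    (h : ∀ τ > b, ∫ s in a..b, (τ - s) ^ p * y s = 0) : EqOn y 0 (Icc a b) := by
  have hpos : ∀ s ∈ Icc a b, 0 < b + 1 - s := fun s hs => by linarith [hs.2]
  have hmoment : ∀ k : ℕ, ∫ s in a..b, (b + 1 - s) ^ p * y s * ((b + 1 - s)⁻¹) ^ k = 0 := by
    intro k
    rw [← integral_rpow_sub_sub_natCast_mul_eq_zero hab.le hp hy h k (b + 1) (by linarith)]
    refine integral_congr fun s hs => ?_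
    rw [uIcc_of_le hab.le] at hs
    rw [Real.rpow_sub (hpos s hs), Real.rpow_natCast, inv_pow, div_eq_mul_inv]
    ring
  have hψ := eqOn_zero_of_integral_mul_pow_eq_zero hab
    (continuousOn_rpow_sub_mul (by linarith) hy)
    ((continuousOn_const.sub continuousOn_id).inv₀ fun s hs => (hpos s hs).ne')
    (fun s _ t _ hst => by simpa using hst) hmoment
  intro s hs
  simpa [(Real.rpow_pos_of_pos (hpos s hs) p).ne'] using hψ hs

theorem integral_rpow_sub_mul_eq_zero_of_periodic {q T : ℝ} {y : ℝ → ℝ} (hq : -1 < q)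
    (hT : 0 < T) (hy : ContinuousOn y (Ici 0)) (hper : ∀ s ≥ 0, y (s + T) = y s)
    (h : ∀ t ≥ 0, ∫ s in 0..t + T, (t + T - s) ^ q * y s = ∫ s in 0..t, (t - s) ^ q * y s) :
    ∀ τ > T, ∫ s in 0..T, (τ - s) ^ q * y s = 0 := by
  have hint : ∀ u v τ : ℝ, 0 ≤ u → u ≤ v →
      IntervalIntegrable (fun s => (τ - s) ^ q * y s) volume u v := fun u v τ hu huv => by
    have := (intervalIntegrable_rpow' (a := τ - u) (b := τ - v) hq).comp_sub_left τ
    simp only [sub_sub_cancel] at this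
    exact this.mul_continuousOn (hy.mono fun s hs => hu.trans (uIcc_of_le huv ▸ hs).1)
  intro τ hτ
  have hshift : ∫ s in T..τ, (τ - s) ^ q * y s = ∫ s in 0..τ - T, (τ - T - s) ^ q * y s := by
    rw [← zero_add T, ← sub_add_cancel τ T, ← integral_comp_add_right, zero_add, sub_add_cancel]
    refine integral_congr_ae (ae_of_all _ fun s hs => ?_)
    rw [uIoc_of_le (by linarith)] at hs
    rw [hper s hs.1.le, sub_add_eq_sub_sub, sub_right_comm]
  have := h (τ - T) (by linarith)
  rw [sub_add_cancel, ← integral_add_adjacent_intervals (hint 0 T τ le_rfl hT.le)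
    (hint T τ τ hT.le hτ.le), hshift] at this
  linarith

theorem iteratedDeriv_add_period {x : ℝ → ℝ} {T : ℝ} (hper : ∀ t > 0, x (t + T) = x t)
    (k : ℕ) : ∀ t > 0, iteratedDeriv k x (t + T) = iteratedDeriv k x t := fun _ ht => by
  simpa only [iteratedDeriv_comp_add_const] using
    (show EqOn (fun z => x (z + T)) x (Ioi 0) from hper).iteratedDeriv_of_isOpen isOpen_Ioi k ht

theorem exists_eq_const_of_periodic_of_iteratedDeriv_eq_zero {T : ℝ} (hT : 0 < T) (n : ℕ)
    {x : ℝ → ℝ} (hx : ContDiffOn ℝ n x (Ioi 0)) (hzero : EqOn (iteratedDeriv n x) 0 (Ioi 0))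
    (hper : ∀ t > 0, x (t + T) = x t) : ∃ c, ∀ t > 0, x t = c := by
  induction n generalizing x with
  | zero => exact ⟨0, fun t ht => by simpa using hzero ht⟩
  | succ n ih =>
    obtain ⟨hdiff, -, hx'⟩ :=
      (contDiffOn_succ_iff_deriv_of_isOpen (n := n) isOpen_Ioi).1 (by exact_mod_cast hx)
    obtain ⟨c, hc⟩ := ih hx' (by simpa only [iteratedDeriv_succ'] using hzero)
      (by simpa using iteratedDeriv_add_period hper 1)
    obtain ⟨ξ, hξ, hslope⟩ := exists_deriv_eq_slope x (lt_add_of_pos_left T hT)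
      (hdiff.continuousOn.mono fun t ht => hT.trans_le ht.1)
      (hdiff.mono fun t ht => hT.trans ht.1)
    rw [hc ξ (hT.trans hξ.1), hper T hT, sub_self, zero_div] at hslope
    exact isOpen_Ioi.exists_is_const_of_deriv_eq_zero isPreconnected_Ioi hdiff
      fun t ht => (hc t ht).trans hslope

theorem eqOn_zero_of_periodic_of_eqOn_Ioc {f : ℝ → ℝ} {T : ℝ} (hT : 0 < T)
    (hper : ∀ t > 0, f (t + T) = f t) (hzero : EqOn f 0 (Ioc 0 T)) : EqOn f 0 (Ioi 0) := by
  have key : ∀ m : ℕ, EqOn f 0 (Ioc 0 ((m + 1) * T)) := by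
    intro m
    induction m with
    | zero => simpa using hzero
    | succ m ih =>
      intro t ht
      rcases le_or_gt t ((m + 1) * T) with hle | hgt
      · exact ih ⟨ht.1, hle⟩
      · have hmT : 0 ≤ (m : ℝ) * T := by positivity
        have hmem : t - T ∈ Ioc 0 ((m + 1) * T) := by
          push_cast at ht; constructor <;> linarith [ht.2]
        rw [← sub_add_cancel t T, hper _ hmem.1]
        exact ih hmem
  intro t (ht : 0 < t)
  obtain ⟨m, hm⟩ := exists_nat_ge (t / T)
  exact key m ⟨ht, by rw [div_le_iff₀ hT] at hm; linarith⟩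

theorem caputo_deriv_not_periodic
    (α : ℝ) (hα : 0 < α) (hαnotint : ∀ m : ℕ, α ≠ m)
    (n : ℕ) (hn : n = ⌊α⌋₊ + 1)
    (T : ℝ) (hT : 0 < T) (x : ℝ → ℝ)
    (hC : ContDiffOn ℝ n x (Ioi 0))
    (hnc : ¬ ∃ c : ℝ, ∀ t > (0:ℝ), x t = c)
    (hper : ∀ t > (0:ℝ), x (t + T) = x t) :
    ¬ ∀ t ≥ (0:ℝ),
        (1 / Real.Gamma (n - α)) *
            ∫ s in (0:ℝ)..(t + T), (t + T - s) ^ ((n : ℝ) - α - 1) * iteratedDeriv n x s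
          = (1 / Real.Gamma (n - α)) *
            ∫ s in (0:ℝ)..t, (t - s) ^ ((n : ℝ) - α - 1) * iteratedDeriv n x s := by
  intro H
  have hfloor : (⌊α⌋₊ : ℝ) < α := (Nat.floor_le hα.le).lt_of_ne (hαnotint _).symm
  have hnα : 0 < (n : ℝ) - α ∧ (n : ℝ) - α < 1 := by
    subst hn; push_cast; constructor <;> linarith [Nat.lt_floor_add_one α]
  set q := (n : ℝ) - α - 1
  set g := iteratedDeriv n x
  have hg_per : ∀ t > 0, g (t + T) = g t := iteratedDeriv_add_period hper n
  have hg_cont : ContinuousOn g (Ioi 0) :=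
    (hC.continuousOn_iteratedDerivWithin le_rfl (uniqueDiffOn_Ioi 0)).congr
      fun _ ht => (iteratedDerivWithin_of_isOpen isOpen_Ioi ht).symm
  -- `g` need not be continuous at `0`, so we work with its translate `y = g (· + T)`.
  set y := fun s => g (s + T)
  have hy_cont : ContinuousOn y (Ici 0) :=
    hg_cont.comp (continuousOn_id.add continuousOn_const) fun s (hs : 0 ≤ s) =>
      show 0 < s + T by linarith
  have hgy : ∀ t ≥ 0, ∀ τ, ∫ s in 0..t, (τ - s) ^ q * g s = ∫ s in 0..t, (τ - s) ^ q * y s :=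
    fun t ht τ => integral_congr_ae (ae_of_all _ fun s hs => by
      rw [uIoc_of_le ht] at hs; simp only [y, hg_per s hs.1])
  have hy_eq : ∀ t ≥ 0,
      ∫ s in 0..t + T, (t + T - s) ^ q * y s = ∫ s in 0..t, (t - s) ^ q * y s := fun t ht => by
    rw [← hgy t ht, ← hgy (t + T) (by linarith)]
    exact mul_left_cancel₀ (one_div_ne_zero (Real.Gamma_pos_of_pos hnα.1).ne') (H t ht)
  have hy_zero : EqOn y 0 (Icc 0 T) :=
    eqOn_zero_of_integral_rpow_sub_mul_eq_zero hT (fun k => by linarith [k.cast_nonneg (α := ℝ)])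
      (hy_cont.mono Icc_subset_Ici_self)
      (integral_rpow_sub_mul_eq_zero_of_periodic (by linarith) hT hy_cont
        (fun s hs => hg_per (s + T) (by linarith)) hy_eq)
  have hg_zero : EqOn g 0 (Ioi 0) := eqOn_zero_of_periodic_of_eqOn_Ioc hT hg_per
    fun t ht => (hg_per t ht.1).symm.trans (hy_zero (Ioc_subset_Icc_self ht))
  exact hnc (exists_eq_const_of_periodic_of_iteratedDeriv_eq_zero hT n hC hg_zero hper)
end

section
/- Let α ∈ (0,∞) be non-integer, n = ⌊α⌋ + 1, T > 0, and suppose x : (0,∞) → ℝ is C^n with x^(n) being T-periodic. If (1/Γ(n-α)) ∫₀^t (t-s)^{n-α-1} x^(n)(s) ds is T-periodic in t, then ∫₀^T (t + T - s)^{n-α-1} x^(n)(s) ds = 0 for all t > 0. -/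
/-!
Split `∫₀^{t+T}` at `T`. Substituting `s ↦ s + T` and using the periodicity of `x⁽ⁿ⁾` turns the
piece over `[T, t + T]` into `∫₀^t (t - s)^{n-α-1} x⁽ⁿ⁾(s) ds`, which by the periodicity of the
Caputo derivative equals the whole integral over `[0, t + T]`; so the piece over `[0, T]` vanishes.
All integrals exist because `n - α - 1 > -1` and `x⁽ⁿ⁾`, being continuous and periodic, is bounded
near `0`.
-/

open Set MeasureTheory

theorem ContDiffOn.continuousOn_iteratedDeriv_of_isOpen {𝕜 F : Type*} [NontriviallyNormedField 𝕜]
    [NormedAddCommGroup F] [NormedSpace 𝕜 F] {f : 𝕜 → F} {s : Set 𝕜} {n : WithTop ℕ∞} {m : ℕ}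
    (h : ContDiffOn 𝕜 n f s) (hmn : m ≤ n) (hs : IsOpen s) :
    ContinuousOn (iteratedDeriv m f) s :=
  (h.continuousOn_iteratedDerivWithin hmn hs.uniqueDiffOn).congr
    (iteratedDerivWithin_of_isOpen hs).symm

theorem intervalIntegrable_rpow_sub_mul_of_abs_le {f : ℝ → ℝ} {γ a b c M : ℝ} (hγ : -1 < γ)
    (hab : a ≤ b) (hf : ContinuousOn f (Ioc a b)) (hM : ∀ s ∈ Ioc a b, |f s| ≤ M) :
    IntervalIntegrable (fun s => (c - s) ^ γ * f s) volume a b := by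
  rw [intervalIntegrable_iff_integrableOn_Ioc_of_le hab]
  have hkernel : IntegrableOn (fun s => (c - s) ^ γ) (Ioc a b) := by
    have h :=
      (intervalIntegral.intervalIntegrable_rpow' hγ (a := c - a) (b := c - b)).comp_sub_left c
    simp only [sub_sub_cancel] at h
    rwa [intervalIntegrable_iff_integrableOn_Ioc_of_le hab] at h
  refine hkernel.mul_bdd (c := M) (hf.aestronglyMeasurable measurableSet_Ioc) ?_
  filter_upwards [ae_restrict_mem measurableSet_Ioc] with s hs
  exact hM s hs

theorem exists_abs_le_on_Ioc_of_periodic {f : ℝ → ℝ} {T : ℝ} (hT : 0 < T)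
    (hf : ContinuousOn f (Ioi 0)) (hper : ∀ s > 0, f (s + T) = f s) (c : ℝ) :
    ∃ M, ∀ s ∈ Ioc 0 c, |f s| ≤ M := by
  obtain ⟨M, hM⟩ : ∃ M, ∀ s ∈ Icc T (c + T), ‖f s‖ ≤ M :=
    isCompact_Icc.exists_bound_of_continuousOn (hf.mono fun s hs => hT.trans_le hs.1)
  refine ⟨M, fun s hs => ?_⟩
  rcases le_or_gt T s with hTs | hsT
  · exact hM s ⟨hTs, by linarith [hs.2]⟩
  · rw [← hper s hs.1]
    exact hM (s + T) ⟨by linarith [hs.1], by linarith [hs.2]⟩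

theorem intervalIntegral_shift_of_periodic {f : ℝ → ℝ} (k : ℝ → ℝ) {T t : ℝ} (ht : 0 ≤ t)
    (hper : ∀ s > 0, f (s + T) = f s) :
    ∫ s in T..(t + T), k (t + T - s) * f s = ∫ s in (0:ℝ)..t, k (t - s) * f s := by
  have hcomp := intervalIntegral.integral_comp_add_right (a := 0) (b := t)
    (fun s => k (t + T - s) * f s) T
  rw [zero_add] at hcomp
  rw [← hcomp]
  refine intervalIntegral.integral_congr_ae (Filter.Eventually.of_forall fun s hs => ?_)
  rw [uIoc_of_le ht] at hs
  simp only [add_sub_add_right_eq_sub, hper s hs.1]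

theorem caputo_periodicity_reduction_general
    (α : ℝ)
    (n : ℕ) (hn : n = ⌊α⌋₊ + 1)
    (T : ℝ) (hT : 0 < T) (x : ℝ → ℝ)
    (hC : ContDiffOn ℝ n x (Ioi 0))
    (hpern : ∀ t > (0:ℝ), iteratedDeriv n x (t + T) = iteratedDeriv n x t)
    (hcaputo : ∀ t ≥ (0:ℝ),
      (1 / Real.Gamma (n - α)) *
          ∫ s in (0:ℝ)..(t + T), (t + T - s) ^ ((n : ℝ) - α - 1) * iteratedDeriv n x s
        = (1 / Real.Gamma (n - α)) *
          ∫ s in (0:ℝ)..t, (t - s) ^ ((n : ℝ) - α - 1) * iteratedDeriv n x s) :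
    ∀ t > (0:ℝ),
      ∫ s in (0:ℝ)..T, (t + T - s) ^ ((n : ℝ) - α - 1) * iteratedDeriv n x s = 0 := by
  intro t ht
  have hαn : α < n := by rw [hn]; push_cast; exact Nat.lt_floor_add_one α
  have hΓ : Real.Gamma (n - α) ≠ 0 := (Real.Gamma_pos_of_pos (by linarith)).ne'
  have hcont := hC.continuousOn_iteratedDeriv_of_isOpen le_rfl isOpen_Ioi
  obtain ⟨M, hM⟩ := exists_abs_le_on_Ioc_of_periodic hT hcont hpern (t + T)
  have hint : ∀ a b, 0 ≤ a → a ≤ b → b ≤ t + T → IntervalIntegrable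
      (fun s => (t + T - s) ^ ((n : ℝ) - α - 1) * iteratedDeriv n x s) volume a b :=
    fun a b ha hab hb => intervalIntegrable_rpow_sub_mul_of_abs_le (by linarith) hab
      (hcont.mono fun s hs => ha.trans_lt hs.1)
      fun s hs => hM s ⟨ha.trans_lt hs.1, hs.2.trans hb⟩
  calc _ = (∫ s in (0:ℝ)..(t + T), (t + T - s) ^ ((n : ℝ) - α - 1) * iteratedDeriv n x s)
        - ∫ s in T..(t + T), (t + T - s) ^ ((n : ℝ) - α - 1) * iteratedDeriv n x s := by
        rw [← intervalIntegral.integral_add_adjacent_intervals (hint 0 T le_rfl hT.le (by linarith))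
          (hint T (t + T) hT.le (by linarith) le_rfl), add_sub_cancel_right]
    _ = 0 := by
        rw [mul_left_cancel₀ (one_div_ne_zero hΓ) (hcaputo t ht.le),
          intervalIntegral_shift_of_periodic (· ^ ((n : ℝ) - α - 1)) ht.le hpern, sub_self]

theorem caputo_periodicity_reduction
    (α : ℝ) (hα : 0 < α) (hαnotint : ∀ m : ℕ, α ≠ m)
    (n : ℕ) (hn : n = ⌊α⌋₊ + 1)
    (T : ℝ) (hT : 0 < T) (x : ℝ → ℝ)
    (hC : ContDiffOn ℝ n x (Ioi 0))
    (hpern : ∀ t > (0:ℝ), iteratedDeriv n x (t + T) = iteratedDeriv n x t)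
    (hcaputo : ∀ t ≥ (0:ℝ),
      (1 / Real.Gamma (n - α)) *
          ∫ s in (0:ℝ)..(t + T), (t + T - s) ^ ((n : ℝ) - α - 1) * iteratedDeriv n x s
        = (1 / Real.Gamma (n - α)) *
          ∫ s in (0:ℝ)..t, (t - s) ^ ((n : ℝ) - α - 1) * iteratedDeriv n x s) :
    ∀ t > (0:ℝ),
      ∫ s in (0:ℝ)..T, (t + T - s) ^ ((n : ℝ) - α - 1) * iteratedDeriv n x s = 0 :=
  caputo_periodicity_reduction_general α n hn T hT x hC hpern hcaputo
end

section
/- Let α ∈ (0,∞) be non-integer, n = ⌊α⌋ + 1. If x : (0,∞) → ℝ is a non-constant T-periodic C^n function (T > 0), then the Riemann–Liouville derivative (RL_D^α x)(t) = (1/Γ(n-α)) (d/dt)^n ∫₀^t (t-s)^{n-α-1} x(s) ds is not a T-periodic function. -/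
/-!
Write `β = n - α - 1 ∈ (-1, 0)`, `F u = ∫₀ᵘ (u - s)^β x s` and `P w = ∫_T^{2T} (w - r)^β x r`.
Periodicity of `x` gives `F (u + T) = F u + P (u + 2T)`, and both `F` and `P` are `Cⁿ` on the
relevant half-lines (for `F`, write `F u = u^(β+1) ∫₀¹ y (uσ) (1 - σ)^β dσ` with `y` a `Cⁿ`
extension of `x` to `ℝ`). So if `F⁽ⁿ⁾` were `T`-periodic, `P⁽ⁿ⁾` would vanish beyond `2T`, i.e.
`∫_T^{2T} (w - r)^γ x r = 0` for all `w > 2T`, where `γ = β - n < 0`; the constant in front,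
`β (β - 1) ⋯ (β - n + 1)`, is nonzero because `α ∉ ℕ`. Differentiating in `w` lowers `γ` by
integers, and `r (w - r)^(e-1) = w (w - r)^(e-1) - (w - r)^e` trades exponent for powers of `r`,
so `∫ r^k (w - r)^(γ - k) x r = 0` for all `k`. Letting `w → ∞` kills the kernel: all moments of
`x` on `[T, 2T]` vanish, hence `x = 0` there by Weierstrass, and everywhere by periodicity.
-/

open Set MeasureTheory Filter Metric Topology

section ParametricIntegral

variable {G : ℝ → ℝ → ℝ} {w : ℝ → ℝ} {a b z₀ δ : ℝ}

theorem continuousAt_intervalIntegral_mul (hδ : 0 < δ)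
    (hG : ContinuousOn (Function.uncurry G) (closedBall z₀ δ ×ˢ uIcc a b))
    (hw : IntervalIntegrable w volume a b) :
    ContinuousAt (fun z => ∫ r in a..b, G z r * w r) z₀ := by
  obtain ⟨C, hC⟩ :=
    (isCompact_closedBall z₀ δ |>.prod isCompact_uIcc).exists_bound_of_continuousOn hG
  refine intervalIntegral.continuousAt_of_dominated_interval (bound := fun r => C * ‖w r‖) ?_ ?_
    (hw.norm.const_mul C) (ae_of_all _ fun r hr => ?_)
  · filter_upwards [closedBall_mem_nhds z₀ hδ] with z hz
    exact (hw.continuousOn_mul (hG.uncurry_left z hz)).def'.aestronglyMeasurable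
  · filter_upwards [closedBall_mem_nhds z₀ hδ] with z hz
    refine ae_of_all _ fun r hr => ?_
    rw [norm_mul]
    exact mul_le_mul_of_nonneg_right (hC (z, r) ⟨hz, uIoc_subset_uIcc hr⟩) (norm_nonneg _)
  · exact ((hG.uncurry_right r (uIoc_subset_uIcc hr)).continuousAt
      (closedBall_mem_nhds z₀ hδ)).mul continuousAt_const

theorem hasDerivAt_intervalIntegral_mul {G' : ℝ → ℝ → ℝ} (hδ : 0 < δ)
    (hG : ContinuousOn (Function.uncurry G) (closedBall z₀ δ ×ˢ uIcc a b))
    (hG' : ContinuousOn (Function.uncurry G') (closedBall z₀ δ ×ˢ uIcc a b))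
    (hdiff : ∀ z ∈ ball z₀ δ, ∀ r ∈ uIcc a b, HasDerivAt (G · r) (G' z r) z)
    (hw : IntervalIntegrable w volume a b) :
    HasDerivAt (fun z => ∫ r in a..b, G z r * w r) (∫ r in a..b, G' z₀ r * w r) z₀ := by
  obtain ⟨C, hC⟩ :=
    (isCompact_closedBall z₀ δ |>.prod isCompact_uIcc).exists_bound_of_continuousOn hG'
  have hz₀ : z₀ ∈ closedBall z₀ δ := mem_closedBall_self hδ.le
  refine (intervalIntegral.hasDerivAt_integral_of_dominated_loc_of_deriv_le
    (F' := fun z r => G' z r * w r) (bound := fun r => C * ‖w r‖) (ball_mem_nhds z₀ hδ) ?_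
    (hw.continuousOn_mul (hG.uncurry_left z₀ hz₀))
    (hw.continuousOn_mul (hG'.uncurry_left z₀ hz₀)).def'.aestronglyMeasurable
    (ae_of_all _ fun r hr z hz => ?_) (hw.norm.const_mul C)
    (ae_of_all _ fun r hr z hz => (hdiff z hz r (uIoc_subset_uIcc hr)).mul_const _)).2
  · filter_upwards [ball_mem_nhds z₀ hδ] with z hz
    exact (hw.continuousOn_mul (hG.uncurry_left z (ball_subset_closedBall hz))
      ).def'.aestronglyMeasurable
  · rw [norm_mul]
    exact mul_le_mul_of_nonneg_right
      (hC (z, r) ⟨ball_subset_closedBall hz, uIoc_subset_uIcc hr⟩) (norm_nonneg _)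

theorem contDiff_intervalIntegral_comp_mul_mul {n : ℕ} {g : ℝ → ℝ}
    (hg : ContDiff ℝ n g) (hw : IntervalIntegrable w volume a b) :
    ContDiff ℝ n (fun u => ∫ σ in a..b, g (u * σ) * w σ) := by
  induction n generalizing g w with
  | zero =>
    refine contDiff_zero.2 (continuous_iff_continuousAt.2 fun u =>
      continuousAt_intervalIntegral_mul one_pos ?_ hw)
    exact (hg.continuous.comp continuous_mul).continuousOn
  | succ n ih =>
    rw [Nat.cast_succ] at hg ⊢
    obtain ⟨hg_diff, -, hg'⟩ := contDiff_succ_iff_deriv.1 hg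
    have hderiv : ∀ u, HasDerivAt (fun u => ∫ σ in a..b, g (u * σ) * w σ)
        (∫ σ in a..b, deriv g (u * σ) * (σ * w σ)) u := by
      intro u
      have h := hasDerivAt_intervalIntegral_mul (G := fun u σ => g (u * σ))
        (G' := fun u σ => deriv g (u * σ) * σ) (z₀ := u) one_pos
        (hg.continuous.comp continuous_mul).continuousOn
        ((hg'.continuous.comp continuous_mul).mul continuous_snd).continuousOn
        (fun u _ σ _ => (hg_diff (u * σ)).hasDerivAt.comp u (hasDerivAt_mul_const σ)) hw
      simpa only [mul_assoc] using h
    refine contDiff_succ_iff_deriv.2 ⟨fun u => (hderiv u).differentiableAt, by simp, ?_⟩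
    rw [funext fun u => (hderiv u).deriv]
    exact ih hg' (hw.continuousOn_mul continuousOn_id)

end ParametricIntegral

section Periodic

variable {x : ℝ → ℝ} {T : ℝ}

theorem apply_add_nat_mul_eq (hT : 0 ≤ T) (hper : ∀ t > 0, x (t + T) = x t) (k : ℕ) {t : ℝ}
    (ht : 0 < t) : x (t + k * T) = x t := by
  induction k with
  | zero => simp
  | succ k ih =>
    rw [Nat.cast_succ, add_one_mul, ← add_assoc, hper _ (by positivity), ih]

theorem apply_add_nat_mul_eq_apply_add_nat_mul (hT : 0 ≤ T) (hper : ∀ t > 0, x (t + T) = x t)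
    {s : ℝ} {i j : ℕ} (hi : 0 < s + i * T) (hj : 0 < s + j * T) :
    x (s + i * T) = x (s + j * T) := by
  wlog hij : i ≤ j generalizing i j
  · exact (this hj hi (le_of_not_ge hij)).symm
  obtain ⟨d, rfl⟩ := Nat.exists_eq_add_of_le hij
  rw [Nat.cast_add, add_mul, ← add_assoc, apply_add_nat_mul_eq hT hper d hi]

theorem exists_mem_Ico_apply_eq (hT : 0 < T) (hper : ∀ t > 0, x (t + T) = x t) {t : ℝ}
    (ht : 0 < t) : ∃ s ∈ Ico T (2 * T), x s = x t := by
  set m := ⌊t / T⌋₊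
  have hm : m * T ≤ t := (le_div_iff₀ hT).1 (Nat.floor_le (by positivity))
  have hm' : t < (m + 1) * T := (div_lt_iff₀ hT).1 (Nat.lt_floor_add_one _)
  refine ⟨t - m * T + T, ⟨by linarith, by linarith⟩, ?_⟩
  have h := apply_add_nat_mul_eq_apply_add_nat_mul (s := t - m * T) (i := 1) (j := m) hT.le hper
    (by push_cast; linarith) (by linarith)
  simpa using h

theorem exists_contDiff_eqOn_Ioi_of_periodic {n : ℕ} (hT : 0 < T)
    (hx : ContDiffOn ℝ n x (Ioi 0)) (hper : ∀ t > 0, x (t + T) = x t) :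
    ∃ y : ℝ → ℝ, ContDiff ℝ n y ∧ EqOn y x (Ioi 0) := by
  set N : ℝ → ℕ := fun t => ⌈-t / T⌉₊ + 1
  have hN : ∀ t, 0 < t + N t * T := fun t => by
    have h := (div_le_iff₀ hT).1 (Nat.le_ceil (-t / T))
    push_cast [N]
    linarith
  refine ⟨fun t => x (t + N t * T), contDiff_iff_contDiffAt.2 fun t => ?_, fun t ht => ?_⟩
  · have hshift : ContDiffAt ℝ n (fun s => x (s + N t * T)) t :=
      (hx.contDiffAt (Ioi_mem_nhds (hN t))).comp t (contDiffAt_id.add contDiffAt_const)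
    refine hshift.congr_of_eventuallyEq (eventually_of_mem ((isOpen_lt continuous_const
      (continuous_id.add continuous_const)).mem_nhds (hN t)) fun s hs => ?_)
    exact apply_add_nat_mul_eq_apply_add_nat_mul hT.le hper (hN s) hs
  · simpa using
      apply_add_nat_mul_eq_apply_add_nat_mul (j := 0) hT.le hper (hN t) (by simpa using ht)

end Periodic

section Primitive

variable {β : ℝ} {x : ℝ → ℝ}

theorem intervalIntegrable_sub_rpow (hβ : -1 < β) (c : ℝ) :
    IntervalIntegrable (fun s => (c - s) ^ β) volume 0 c := by
  simpa using
    ((intervalIntegral.intervalIntegrable_rpow' hβ (a := 0) (b := c)).comp_sub_left c).symm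

theorem primitive_sub_rpow_mul_eq_rpow_mul {u : ℝ} (hu : 0 < u) :
    ∫ s in 0..u, (u - s) ^ β * x s = u ^ (β + 1) * ∫ σ in 0..1, x (u * σ) * (1 - σ) ^ β := by
  have hscale : ∫ σ in 0..1, (u - u * σ) ^ β * x (u * σ)
      = u ^ β * ∫ σ in 0..1, x (u * σ) * (1 - σ) ^ β := by
    rw [← intervalIntegral.integral_const_mul]
    refine intervalIntegral.integral_congr fun σ hσ => ?_
    rw [uIcc_of_le zero_le_one] at hσ
    rw [show u - u * σ = u * (1 - σ) by ring, Real.mul_rpow hu.le (by linarith [hσ.2])]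
    ring
  have h := intervalIntegral.integral_comp_mul_left (fun s => (u - s) ^ β * x s) hu.ne'
    (a := 0) (b := 1)
  rw [hscale, mul_zero, mul_one, smul_eq_mul] at h
  rw [Real.rpow_add_one hu.ne', mul_comm (u ^ β) u, mul_assoc, h, ← mul_assoc,
    mul_inv_cancel₀ hu.ne', one_mul]

theorem contDiffOn_primitive_sub_rpow_mul {n : ℕ} {T : ℝ} (hβ : -1 < β) (hT : 0 < T)
    (hx : ContDiffOn ℝ n x (Ioi 0)) (hper : ∀ t > 0, x (t + T) = x t) :
    ContDiffOn ℝ n (fun u => ∫ s in 0..u, (u - s) ^ β * x s) (Ioi 0) := by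
  obtain ⟨y, hy, hyx⟩ := exists_contDiff_eqOn_Ioi_of_periodic hT hx hper
  have hweight : IntervalIntegrable (fun σ => (1 - σ) ^ β) volume 0 1 := by
    simpa using (intervalIntegrable_sub_rpow hβ 1)
  have hrpow : ContDiffOn ℝ n (fun u : ℝ => u ^ (β + 1)) (Ioi 0) := fun u hu =>
    (Real.contDiffAt_rpow_const_of_ne hu.ne').contDiffWithinAt
  refine (hrpow.mul (contDiff_intervalIntegral_comp_mul_mul hy hweight).contDiffOn).congr
    fun u hu => ?_
  rw [← primitive_sub_rpow_mul_eq_rpow_mul hu]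
  refine intervalIntegral.integral_congr_ae (ae_of_all _ fun s hs => ?_)
  rw [uIoc_of_le hu.le] at hs
  rw [hyx hs.1]

theorem intervalIntegrable_sub_rpow_mul_of_periodic {T c : ℝ} (hβ : -1 < β) (hT : 0 < T)
    (hx : ContinuousOn x (Ioi 0)) (hper : ∀ t > 0, x (t + T) = x t) (hc : 0 ≤ c) :
    IntervalIntegrable (fun s => (c - s) ^ β * x s) volume 0 c := by
  have hcont : ContinuousOn (fun s => x (s + T)) (uIcc 0 c) :=
    hx.comp (continuous_add_const T).continuousOn fun s hs => by
      rw [uIcc_of_le hc] at hs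
      exact show 0 < s + T by linarith [hs.1]
  refine (intervalIntegrable_congr fun s hs => ?_).1
    ((intervalIntegrable_sub_rpow hβ c).mul_continuousOn hcont)
  rw [uIoc_of_le hc] at hs
  simp only [hper s hs.1]

theorem primitive_sub_rpow_mul_add_period {T u : ℝ} (hβ : -1 < β) (hT : 0 < T)
    (hx : ContinuousOn x (Ioi 0)) (hper : ∀ t > 0, x (t + T) = x t) (hu : 0 < u) :
    ∫ s in 0..u + T, (u + T - s) ^ β * x s
      = (∫ s in 0..u, (u - s) ^ β * x s) + ∫ r in T..2 * T, (u + 2 * T - r) ^ β * x r := by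
  have hint := intervalIntegrable_sub_rpow_mul_of_periodic hβ hT hx hper (c := u + T)
    (by linarith)
  have hfirst :
      ∫ s in 0..T, (u + T - s) ^ β * x s = ∫ r in T..2 * T, (u + 2 * T - r) ^ β * x r := by
    calc ∫ s in 0..T, (u + T - s) ^ β * x s
        = ∫ s in 0..T, (u + 2 * T - (s + T)) ^ β * x (s + T) := by
          refine intervalIntegral.integral_congr_ae (ae_of_all _ fun s hs => ?_)
          rw [uIoc_of_le hT.le] at hs
          rw [hper s hs.1]
          ring_nf
      _ = ∫ r in T..2 * T, (u + 2 * T - r) ^ β * x r := by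
          rw [intervalIntegral.integral_comp_add_right (fun r => (u + 2 * T - r) ^ β * x r),
            zero_add, two_mul]
  have hsecond : ∫ s in T..u + T, (u + T - s) ^ β * x s = ∫ s in 0..u, (u - s) ^ β * x s := by
    calc ∫ s in T..u + T, (u + T - s) ^ β * x s
        = ∫ s in 0..u, (u + T - (s + T)) ^ β * x (s + T) := by
          rw [intervalIntegral.integral_comp_add_right (fun s => (u + T - s) ^ β * x s), zero_add]
      _ = ∫ s in 0..u, (u - s) ^ β * x s := by
          refine intervalIntegral.integral_congr_ae (ae_of_all _ fun s hs => ?_)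
          rw [uIoc_of_le hu.le] at hs
          rw [hper s hs.1, add_sub_add_right_eq_sub]
  have hTmem : T ∈ uIcc 0 (u + T) := by
    rw [uIcc_of_le (by linarith)]
    constructor <;> linarith
  rw [← intervalIntegral.integral_add_adjacent_intervals
    (hint.mono_set (uIcc_subset_uIcc left_mem_uIcc hTmem))
    (hint.mono_set (uIcc_subset_uIcc hTmem right_mem_uIcc)), hfirst, hsecond,
    add_comm]

end Primitive

section Kernel

variable {x : ℝ → ℝ} {a b : ℝ}

theorem hasDerivAt_integral_sub_rpow_mul (hab : a ≤ b) (hx : ContinuousOn x (Icc a b)) (e : ℝ)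
    {w : ℝ} (hw : b < w) :
    HasDerivAt (fun v => ∫ r in a..b, (v - r) ^ e * x r)
      (e * ∫ r in a..b, (w - r) ^ (e - 1) * x r) w := by
  have hδ : 0 < (w - b) / 2 := by linarith
  have hpos : ∀ p ∈ closedBall w ((w - b) / 2) ×ˢ uIcc a b, p.1 - p.2 ≠ 0 := by
    rintro ⟨v, r⟩ ⟨hv, hr⟩
    rw [mem_closedBall, Real.dist_eq, abs_le] at hv
    rw [uIcc_of_le hab] at hr
    exact (show 0 < v - r by linarith [hr.2, hv.1]).ne'
  have hcont : ∀ e' : ℝ, ContinuousOn (Function.uncurry fun v r : ℝ => (v - r) ^ e')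
      (closedBall w ((w - b) / 2) ×ˢ uIcc a b) := fun e' =>
    continuous_sub.continuousOn.rpow_const fun p hp => Or.inl (hpos p hp)
  have h := hasDerivAt_intervalIntegral_mul (G := fun v r => (v - r) ^ e)
    (G' := fun v r => e * (v - r) ^ (e - 1)) hδ (hcont e) (continuousOn_const.mul (hcont (e - 1)))
    (fun v hv r hr => by
      simpa using ((hasDerivAt_id v).sub_const r).rpow_const
        (Or.inl (hpos (v, r) ⟨ball_subset_closedBall hv, hr⟩)))
    (hx.intervalIntegrable_of_Icc hab)
  simpa only [mul_assoc, intervalIntegral.integral_const_mul] using h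

theorem iteratedDeriv_integral_sub_rpow_mul (hab : a ≤ b) (hx : ContinuousOn x (Icc a b))
    (e : ℝ) (k : ℕ) {w : ℝ} (hw : b < w) :
    iteratedDeriv k (fun v => ∫ r in a..b, (v - r) ^ e * x r) w
      = (∏ j ∈ Finset.range k, (e - j)) * ∫ r in a..b, (w - r) ^ (e - k) * x r := by
  induction k generalizing w with
  | zero => simp
  | succ k ih =>
    have hk : iteratedDeriv k (fun v => ∫ r in a..b, (v - r) ^ e * x r) =ᶠ[𝓝 w]
        fun v => (∏ j ∈ Finset.range k, (e - j)) * ∫ r in a..b, (v - r) ^ (e - k) * x r :=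
      eventually_of_mem (Ioi_mem_nhds hw) fun v hv => ih hv
    rw [iteratedDeriv_succ, hk.deriv_eq,
      ((hasDerivAt_integral_sub_rpow_mul hab hx _ hw).const_mul _).deriv, Finset.prod_range_succ,
      Nat.cast_succ, sub_sub]
    ring

theorem contDiffOn_integral_sub_rpow_mul (hab : a ≤ b) (hx : ContinuousOn x (Icc a b)) (e : ℝ)
    (n : ℕ) : ContDiffOn ℝ n (fun v => ∫ r in a..b, (v - r) ^ e * x r) (Ioi b) := by
  induction n generalizing e with
  | zero =>
    exact contDiffOn_zero.2 fun w hw =>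
      (hasDerivAt_integral_sub_rpow_mul hab hx e hw).continuousAt.continuousWithinAt
  | succ n ih =>
    rw [Nat.cast_succ, contDiffOn_succ_iff_deriv_of_isOpen isOpen_Ioi]
    refine ⟨fun w hw => (hasDerivAt_integral_sub_rpow_mul hab hx e hw).differentiableAt
      |>.differentiableWithinAt, by simp, ?_⟩
    exact ((ih (e - 1)).const_smul e).congr fun w hw =>
      (hasDerivAt_integral_sub_rpow_mul hab hx e hw).deriv

end Kernel

section Moments

variable {x : ℝ → ℝ} {a b γ : ℝ}

theorem integral_sub_rpow_sub_nat_mul_eq_zero (hab : a ≤ b) (hx : ContinuousOn x (Icc a b))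
    (hγ : ∀ j : ℕ, γ ≠ j) (h : ∀ w > b, ∫ r in a..b, (w - r) ^ γ * x r = 0) (j : ℕ) :
    ∀ w > b, ∫ r in a..b, (w - r) ^ (γ - j) * x r = 0 := by
  induction j with
  | zero => simpa using h
  | succ j ih =>
    intro w hw
    have hconst : HasDerivAt (fun v => ∫ r in a..b, (v - r) ^ (γ - j) * x r) 0 w :=
      (hasDerivAt_const w 0).congr_of_eventuallyEq (eventually_of_mem (Ioi_mem_nhds hw) ih)
    have h0 := (hasDerivAt_integral_sub_rpow_mul hab hx (γ - j) hw).unique hconst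
    rw [Nat.cast_succ, ← sub_sub]
    exact (mul_eq_zero.1 h0).resolve_left (sub_ne_zero.2 (hγ j))

theorem integral_pow_mul_sub_rpow_mul_eq_zero (hab : a ≤ b) (hx : ContinuousOn x (Icc a b))
    (h : ∀ j : ℕ, ∀ w > b, ∫ r in a..b, (w - r) ^ (γ - j) * x r = 0) (k : ℕ) :
    ∀ j : ℕ, ∀ w > b, ∫ r in a..b, r ^ k * (w - r) ^ (γ - (j + k : ℕ)) * x r = 0 := by
  induction k with
  | zero => simpa using h
  | succ k ih =>
    intro j w hw
    set e : ℝ := γ - (j + k : ℕ) with he_def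
    have hpos : ∀ r ∈ uIcc a b, 0 < w - r := fun r hr => by
      rw [uIcc_of_le hab] at hr
      linarith [hr.2]
    have hint : ∀ e' : ℝ, IntervalIntegrable (fun r => r ^ k * (w - r) ^ e' * x r) volume a b :=
      fun e' => ContinuousOn.intervalIntegrable (((continuousOn_pow k).mul
        ((continuousOn_const.sub continuousOn_id).rpow_const fun r hr =>
          Or.inl (hpos r hr).ne')).mul (by rwa [uIcc_of_le hab]))
    have hsplit : ∫ r in a..b, r ^ (k + 1) * (w - r) ^ (e - 1) * x r
        = w * (∫ r in a..b, r ^ k * (w - r) ^ (e - 1) * x r)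
          - ∫ r in a..b, r ^ k * (w - r) ^ e * x r := by
      rw [← intervalIntegral.integral_const_mul, ← intervalIntegral.integral_sub
        ((hint _).const_mul w) (hint e)]
      refine intervalIntegral.integral_congr fun r hr => ?_
      have := Real.rpow_add_one (hpos r hr).ne' (e - 1)
      rw [sub_add_cancel] at this
      simp only [this, pow_succ]
      ring
    have he : γ - ((j + (k + 1) : ℕ) : ℝ) = e - 1 := by
      rw [he_def]; push_cast; ring
    have hlower : ∫ r in a..b, r ^ k * (w - r) ^ (e - 1) * x r = 0 := by
      rw [show e - 1 = γ - ((j + 1 + k : ℕ) : ℝ) by rw [he_def]; push_cast; ring]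
      exact ih (j + 1) w hw
    rw [he, hsplit, ih j w hw, hlower, mul_zero, sub_zero]

theorem integral_pow_mul_eq_zero_of_sub_rpow (ha : 0 < a) (hab : a ≤ b)
    (hx : ContinuousOn x (Icc a b))
    (h : ∀ k : ℕ, ∀ w > b, ∫ r in a..b, r ^ k * (w - r) ^ (γ - k) * x r = 0) (k : ℕ) :
    ∫ r in a..b, r ^ k * x r = 0 := by
  have hb : 0 < b := ha.trans_le hab
  have hr : ∀ r ∈ uIcc a b, 0 < r ∧ r ≤ b := fun r hr => by
    rw [uIcc_of_le hab] at hr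
    exact ⟨ha.trans_le hr.1, hr.2⟩
  -- In the variable `z = 1 / w` the kernel `(1 - z r)^(γ - k)` extends continuously to `z = 0`.
  set f : ℝ → ℝ := fun z => ∫ r in a..b, r ^ k * (1 - z * r) ^ (γ - k) * x r
  have hf : ∀ z ∈ Ioo 0 b⁻¹, f z = 0 := fun z ⟨hz, hzb⟩ => by
    have hbz : b < z⁻¹ := (lt_inv_comm₀ hz hb).1 hzb
    calc f z = ∫ r in a..b, z ^ (γ - k) * (r ^ k * (z⁻¹ - r) ^ (γ - k) * x r) := by
          refine intervalIntegral.integral_congr fun r hr' => ?_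
          rw [show 1 - z * r = z * (z⁻¹ - r) by field_simp,
            Real.mul_rpow hz.le (by linarith [(hr r hr').2])]
          ring
      _ = 0 := by rw [intervalIntegral.integral_const_mul, h k _ hbz, mul_zero]
  have hcont : ContinuousAt f 0 := by
    have hδ : 0 < (2 * b)⁻¹ := by positivity
    refine continuousAt_intervalIntegral_mul (G := fun z r => r ^ k * (1 - z * r) ^ (γ - k)) hδ
      (ContinuousOn.mul (continuous_snd.pow k).continuousOn (ContinuousOn.rpow_const
        (continuous_const.sub continuous_mul).continuousOn fun p hp => Or.inl ?_))
      (hx.intervalIntegrable_of_Icc hab)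
    obtain ⟨hp1, hp2⟩ := hp
    rw [mem_closedBall, dist_zero_right, Real.norm_eq_abs] at hp1
    obtain ⟨hr0, hrb⟩ := hr p.2 hp2
    have : p.1 * p.2 ≤ 1 / 2 := calc
      p.1 * p.2 ≤ |p.1| * p.2 := mul_le_mul_of_nonneg_right (le_abs_self _) hr0.le
      _ ≤ (2 * b)⁻¹ * b := mul_le_mul hp1 hrb hr0.le (by positivity)
      _ = 1 / 2 := by field_simp
    exact (show 0 < 1 - p.1 * p.2 by linarith).ne'
  have hev : (fun _ => (0 : ℝ)) =ᶠ[𝓝[>] 0] f :=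
    eventually_of_mem (Ioo_mem_nhdsGT (inv_pos.2 hb)) fun z hz => (hf z hz).symm
  have hlim : Tendsto f (𝓝[>] 0) (𝓝 0) := tendsto_const_nhds.congr' hev
  have h0 : f 0 = 0 := tendsto_nhds_unique (hcont.tendsto.mono_left nhdsWithin_le_nhds) hlim
  simpa [f] using h0

theorem integral_mul_self_eq_zero_of_integral_pow_mul_eq_zero (hab : a ≤ b)
    (hx : ContinuousOn x (Icc a b)) (h : ∀ k : ℕ, ∫ r in a..b, r ^ k * x r = 0) :
    ∫ r in a..b, x r * x r = 0 := by
  have hxint : IntervalIntegrable x volume a b := hx.intervalIntegrable_of_Icc hab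
  have hpoly : ∀ p : Polynomial ℝ, ∫ r in a..b, p.eval r * x r = 0 := fun p => by
    simp_rw [Polynomial.eval_eq_sum_range, Finset.sum_mul]
    rw [intervalIntegral.integral_finsetSum fun i _ =>
      hxint.continuousOn_mul (g := fun r => p.coeff i * r ^ i) (by fun_prop)]
    refine Finset.sum_eq_zero fun i _ => ?_
    simp_rw [mul_assoc]
    rw [intervalIntegral.integral_const_mul, h i, mul_zero]
  have hsmall : ∀ ε > 0, |∫ r in a..b, x r * x r| ≤ ε * ∫ r in a..b, |x r| := fun ε hε => by
    obtain ⟨p, hp⟩ := exists_polynomial_near_of_continuousOn a b x hx ε hε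
    have hdiff : IntervalIntegrable (fun r => (x r - p.eval r) * x r) volume a b :=
      hxint.continuousOn_mul (by rw [uIcc_of_le hab]; exact hx.sub p.continuous.continuousOn)
    calc |∫ r in a..b, x r * x r|
        = |∫ r in a..b, (x r - p.eval r) * x r| := by
          rw [intervalIntegral.integral_congr
            (g := fun r => (x r - p.eval r) * x r + p.eval r * x r) fun r _ => by ring,
            intervalIntegral.integral_add hdiff (hxint.continuousOn_mul p.continuous.continuousOn),
            hpoly, add_zero]
      _ ≤ ∫ r in a..b, |(x r - p.eval r) * x r| :=
          intervalIntegral.abs_integral_le_integral_abs hab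
      _ ≤ ∫ r in a..b, ε * |x r| := by
          refine intervalIntegral.integral_mono_on hab hdiff.abs (hxint.abs.const_mul ε)
            fun r hr => ?_
          rw [abs_mul]
          exact mul_le_mul_of_nonneg_right (by rw [abs_sub_comm]; exact (hp r hr).le)
            (abs_nonneg _)
      _ = ε * ∫ r in a..b, |x r| := intervalIntegral.integral_const_mul ε _
  have hK : 0 ≤ ∫ r in a..b, |x r| := intervalIntegral.integral_nonneg hab fun r _ => abs_nonneg _
  refine abs_nonpos_iff.1 (le_of_forall_pos_le_add fun ε hε => ?_)
  calc |∫ r in a..b, x r * x r| ≤ ε / ((∫ r in a..b, |x r|) + 1) * ∫ r in a..b, |x r| :=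
        hsmall _ (by positivity)
    _ ≤ 0 + ε := by
        rw [zero_add, div_mul_eq_mul_div, div_le_iff₀ (by positivity)]
        nlinarith

theorem eqOn_zero_of_integral_pow_mul_eq_zero (hab : a < b) (hx : ContinuousOn x (Icc a b))
    (h : ∀ k : ℕ, ∫ r in a..b, r ^ k * x r = 0) : EqOn x 0 (Icc a b) := by
  have hsq := integral_mul_self_eq_zero_of_integral_pow_mul_eq_zero hab.le hx h
  have hae : (fun r => x r * x r) =ᵐ[volume.restrict (Icc a b)] 0 := by
    rw [Measure.restrict_congr_set Ioc_ae_eq_Icc.symm]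
    refine (intervalIntegral.integral_eq_zero_iff_of_le_of_nonneg_ae hab.le
      (ae_of_all _ fun r => mul_self_nonneg (x r)) ?_).1 hsq
    exact (hx.mul hx).intervalIntegrable_of_Icc hab.le
  intro r hr
  exact mul_self_eq_zero.1 (Measure.eqOn_Icc_of_ae_eq volume hab.ne hae (hx.mul hx)
    continuousOn_const hr)

theorem eqOn_zero_of_integral_sub_rpow_mul_eq_zero (ha : 0 < a) (hab : a < b)
    (hx : ContinuousOn x (Icc a b)) (hγ : ∀ j : ℕ, γ ≠ j)
    (h : ∀ w > b, ∫ r in a..b, (w - r) ^ γ * x r = 0) : EqOn x 0 (Icc a b) := by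
  have hlowered := integral_sub_rpow_sub_nat_mul_eq_zero hab.le hx hγ h
  refine eqOn_zero_of_integral_pow_mul_eq_zero hab hx
    (integral_pow_mul_eq_zero_of_sub_rpow (γ := γ) ha hab.le hx fun k => ?_)
  simpa using integral_pow_mul_sub_rpow_mul_eq_zero hab.le hx hlowered k 0

end Moments

theorem iteratedDeriv_integral_sub_rpow_mul_eq_zero_of_periodic {β T : ℝ} {n : ℕ} {x : ℝ → ℝ}
    (hβ : -1 < β) (hT : 0 < T) (hx : ContDiffOn ℝ n x (Ioi 0))
    (hper : ∀ t > 0, x (t + T) = x t)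
    (hF : ∀ t > 0, iteratedDeriv n (fun u => ∫ s in 0..u, (u - s) ^ β * x s) (t + T)
      = iteratedDeriv n (fun u => ∫ s in 0..u, (u - s) ^ β * x s) t)
    {w : ℝ} (hw : 2 * T < w) :
    iteratedDeriv n (fun v => ∫ r in T..2 * T, (v - r) ^ β * x r) w = 0 := by
  set F := fun u => ∫ s in 0..u, (u - s) ^ β * x s
  set P := fun v => ∫ r in T..2 * T, (v - r) ^ β * x r
  have ht : 0 < w - 2 * T := by linarith
  have hsplit : (fun u => F (u + T)) =ᶠ[𝓝 (w - 2 * T)] F + fun u => P (u + 2 * T) :=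
    eventually_of_mem (Ioi_mem_nhds ht) fun u hu =>
      primitive_sub_rpow_mul_add_period hβ hT hx.continuousOn hper hu
  have hF_smooth : ContDiffAt ℝ n F (w - 2 * T) :=
    (contDiffOn_primitive_sub_rpow_mul hβ hT hx hper).contDiffAt (Ioi_mem_nhds ht)
  have hP_smooth : ContDiffAt ℝ n (fun u => P (u + 2 * T)) (w - 2 * T) := by
    refine ((contDiffOn_integral_sub_rpow_mul (by linarith) ?_ β n).contDiffAt
      (Ioi_mem_nhds (by linarith))).comp _ (contDiffAt_id.add contDiffAt_const)
    exact hx.continuousOn.mono fun r hr => hT.trans_le hr.1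
  have h := hF _ ht
  rw [← congrFun (iteratedDeriv_comp_add_const n F T), hsplit.iteratedDeriv_eq,
    iteratedDeriv_add hF_smooth hP_smooth, iteratedDeriv_comp_add_const] at h
  simp only [sub_add_cancel] at h
  linarith

theorem riemann_liouville_deriv_not_periodic
    (α : ℝ) (hα : 0 < α) (hαnotint : ∀ m : ℕ, α ≠ m)
    (n : ℕ) (hn : n = ⌊α⌋₊ + 1)
    (T : ℝ) (hT : 0 < T) (x : ℝ → ℝ)
    (hC : ContDiffOn ℝ n x (Ioi 0))
    (hnc : ¬ ∃ c : ℝ, ∀ t > (0:ℝ), x t = c)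
    (hper : ∀ t > (0:ℝ), x (t + T) = x t) :
    ¬ ∀ t > (0:ℝ),
        (1 / Real.Gamma (n - α)) *
            iteratedDeriv n
              (fun u : ℝ => ∫ s in (0:ℝ)..u, (u - s) ^ ((n : ℝ) - α - 1) * x s) (t + T)
          = (1 / Real.Gamma (n - α)) *
            iteratedDeriv n
              (fun u : ℝ => ∫ s in (0:ℝ)..u, (u - s) ^ ((n : ℝ) - α - 1) * x s) t := by
  intro hP
  have hαn : α < n := by
    rw [hn]
    push_cast
    exact Nat.lt_floor_add_one α
  have hΓ : 1 / Real.Gamma (n - α) ≠ 0 :=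
    one_div_ne_zero (Real.Gamma_pos_of_pos (by linarith)).ne'
  have hprod : ∏ j ∈ Finset.range n, ((n : ℝ) - α - 1 - j) ≠ 0 :=
    Finset.prod_ne_zero_iff.2 fun j hj h => hαnotint (n - (j + 1)) (by
      rw [Nat.cast_sub (Finset.mem_range.1 hj)]
      push_cast
      linarith)
  have hxI : ContinuousOn x (Icc T (2 * T)) :=
    hC.continuousOn.mono fun r hr => hT.trans_le hr.1
  have hzero : EqOn x 0 (Icc T (2 * T)) := by
    refine eqOn_zero_of_integral_sub_rpow_mul_eq_zero (γ := (n : ℝ) - α - 1 - n) hT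
      (by linarith) hxI (fun j h => by linarith [j.cast_nonneg (α := ℝ)]) fun w hw => ?_
    have h := iteratedDeriv_integral_sub_rpow_mul_eq_zero_of_periodic (by linarith) hT hC hper
      (fun t ht => mul_left_cancel₀ hΓ (hP t ht)) hw
    rw [iteratedDeriv_integral_sub_rpow_mul (by linarith) hxI _ n hw] at h
    exact (mul_eq_zero.1 h).resolve_left hprod
  refine hnc ⟨0, fun t ht => ?_⟩
  obtain ⟨s, hs, hxs⟩ := exists_mem_Ico_apply_eq hT hper ht
  rw [← hxs]
  exact hzero (Ico_subset_Icc_self hs)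
end

section
/- Let f : [0,∞) × ℝ^p → ℝ^p be T-periodic in its first argument, α ∈ (0,1)^p non-integer entries, and k a positive integer. Then the system C_D^{α_i} x_i(t) = f_i(t, x(t)) has no non-constant kT-periodic C^1 solution. -/
/-!
Let `y` be `S`-periodic on `(0, ∞)` and suppose `K t = ∫₀ᵗ (t - s)^(-α) y'(s) ds` is
`S`-periodic too. Splitting `K (t + S)` at `S` and using the periodicity of `y'` leaves
`∫₀^S (r - s)^(-α) y'(s) ds = 0` for every `r > S`. Differentiating in `r` gives the same for
every kernel `(r - s)^(-(α + n))`, and the substitution `s = r - u⁻¹` turns these identities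
into the vanishing of all moments of a continuous function, which must then be zero by Weierstrass
approximation. Hence `y' = 0` on a period and `y` is constant.

Every coordinate of a `k T`-periodic solution is such a `y` with `S = k T`, because its Caputo
derivative `f (t, x t)` is `k T`-periodic.
-/

open Set MeasureTheory intervalIntegral Polynomial
open scoped Interval

def PeriodicOnPos {β : Type*} (g : ℝ → β) (S : ℝ) : Prop :=
  ∀ t > 0, g (t + S) = g t

namespace PeriodicOnPos

variable {β : Type*} {g : ℝ → β} {S : ℝ}

theorem exists_mem_Ioc_eq (hg : PeriodicOnPos g S) (hS : 0 < S) {t : ℝ} (ht : 0 < t) :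
    ∃ s ∈ Ioc S (2 * S), g t = g s := by
  suffices ∀ n : ℕ, ∀ t ∈ Ioc 0 (n * S), ∃ s ∈ Ioc S (2 * S), g t = g s by
    obtain ⟨n, hn⟩ := exists_nat_ge (t / S)
    exact this n t ⟨ht, (div_le_iff₀ hS).1 hn⟩
  intro n
  induction n with
  | zero => intro t ht; simp at ht
  | succ n ih =>
    rintro t ⟨ht0, htn⟩
    rcases le_or_gt t S with htS | htS
    · exact ⟨t + S, ⟨by linarith, by linarith⟩, (hg t ht0).symm⟩
    · obtain ⟨s, hs, hts⟩ := ih (t - S) ⟨by linarith, by push_cast at htn; linarith⟩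
      exact ⟨s, hs, by rw [← hts, ← hg (t - S) (by linarith), sub_add_cancel]⟩

theorem exists_bound [NormedAddCommGroup β] (hg : PeriodicOnPos g S) (hS : 0 < S)
    (hc : ContinuousOn g (Ioi 0)) : ∃ C, ∀ t > 0, ‖g t‖ ≤ C := by
  obtain ⟨C, hC⟩ := isCompact_Icc.exists_bound_of_continuousOn
    (hc.mono fun s (hs : s ∈ Icc S (2 * S)) => hS.trans_le hs.1)
  refine ⟨C, fun t ht => ?_⟩
  obtain ⟨s, hs, hts⟩ := hg.exists_mem_Ioc_eq hS ht
  exact hts ▸ hC s (Ioc_subset_Icc_self hs)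

protected theorem deriv [NormedAddCommGroup β] [NormedSpace ℝ β] (hg : PeriodicOnPos g S) :
    PeriodicOnPos (deriv g) S := fun t ht => by
  rw [← deriv_comp_add_const]
  exact Filter.EventuallyEq.deriv_eq (Filter.eventually_of_mem (Ioi_mem_nhds ht) hg)

end PeriodicOnPos

theorem integral_polynomial_eval_mul_eq_zero {H : ℝ → ℝ} {m M : ℝ} (hmM : m ≤ M)
    (hH : ContinuousOn H (Icc m M)) (h : ∀ n : ℕ, ∫ y in m..M, y ^ n * H y = 0) (q : ℝ[X]) :
    ∫ y in m..M, q.eval y * H y = 0 := by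
  induction q using Polynomial.induction_on' with
  | add p q hp hq =>
    simp only [eval_add, add_mul]
    rw [intervalIntegral.integral_add, hp, hq, add_zero] <;>
      exact ((Polynomial.continuousOn _).mul hH).intervalIntegrable_of_Icc hmM
  | monomial n b =>
    simp only [eval_monomial, mul_assoc, intervalIntegral.integral_const_mul, h, mul_zero]

theorem eqOn_zero_of_forall_integral_pow_mul_eq_zero {H : ℝ → ℝ} {m M : ℝ} (hmM : m < M)
    (hH : ContinuousOn H (Icc m M)) (h : ∀ n : ℕ, ∫ y in m..M, y ^ n * H y = 0) :
    EqOn H 0 (Icc m M) := by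
  obtain ⟨B, hB⟩ := isCompact_Icc.exists_bound_of_continuousOn hH
  have hB0 : 0 ≤ B := (norm_nonneg _).trans (hB m (left_mem_Icc.2 hmM.le))
  have hsmall : ∀ η > 0, ‖∫ y in m..M, H y * H y‖ ≤ B * η * (M - m) := fun η hη => by
    obtain ⟨q, hq⟩ := exists_polynomial_near_of_continuousOn m M H hH η hη
    have hqH : ∫ y in m..M, H y * (H y - q.eval y) = ∫ y in m..M, H y * H y := by
      simp_rw [mul_sub]
      rw [intervalIntegral.integral_sub (f := fun y => H y * H y) (g := fun y => H y * eval y q)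
        ((hH.mul hH).intervalIntegrable_of_Icc hmM.le)
        ((hH.mul (Polynomial.continuousOn _)).intervalIntegrable_of_Icc hmM.le)]
      simp_rw [mul_comm (H _) (eval _ q)]
      rw [integral_polynomial_eval_mul_eq_zero hmM.le hH h q, sub_zero]
    rw [← hqH, ← abs_of_pos (sub_pos.2 hmM)]
    refine intervalIntegral.norm_integral_le_of_norm_le_const fun y hy => ?_
    have hy' : y ∈ Icc m M := Ioc_subset_Icc_self (uIoc_of_le hmM.le ▸ hy)
    rw [norm_mul, Real.norm_eq_abs (_ - _), abs_sub_comm]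
    exact mul_le_mul (hB y hy') (hq y hy').le (abs_nonneg _) hB0
  have hsq : ∫ y in m..M, H y * H y = 0 := by
    refine norm_le_zero_iff.1 (le_of_forall_pos_le_add fun ε hε => ?_)
    have hK : 0 ≤ B * (M - m) := mul_nonneg hB0 (sub_nonneg.2 hmM.le)
    calc ‖∫ y in m..M, H y * H y‖ ≤ B * (ε / (B * (M - m) + 1)) * (M - m) :=
          hsmall _ (by positivity)
      _ = ε * (B * (M - m) / (B * (M - m) + 1)) := by ring
      _ ≤ ε * 1 := by gcongr; exact div_le_one_of_le₀ (by linarith) (by positivity)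
      _ = 0 + ε := by ring
  have hae : (fun y => H y * H y) =ᵐ[volume.restrict (Icc m M)] 0 := by
    rw [← Measure.restrict_congr_set Ioc_ae_eq_Icc]
    exact (intervalIntegral.integral_eq_zero_iff_of_le_of_nonneg_ae hmM.le
      (ae_of_all _ fun y => mul_self_nonneg (H y))
      ((hH.mul hH).intervalIntegrable_of_Icc hmM.le)).1 hsq
  exact fun y hy => mul_self_eq_zero.1
    (Measure.eqOn_Icc_of_ae_eq volume hmM.ne hae (hH.mul hH) continuousOn_const hy)

section

variable {a c : ℝ} {G : ℝ → ℝ}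

theorem continuousOn_sub_rpow_mul (hG : ContinuousOn G (Icc a c)) {r : ℝ} (hr : c < r) (e : ℝ) :
    ContinuousOn (fun s => (r - s) ^ e * G s) (Icc a c) :=
  ((continuousOn_const.sub continuousOn_id).rpow_const
    fun _ hs => Or.inl (sub_ne_zero.2 (hs.2.trans_lt hr).ne')).mul hG

theorem hasDerivAt_integral_sub_rpow_mul_s19 (hac : a ≤ c) (hG : ContinuousOn G (Icc a c))
    {r : ℝ} (hr : c < r) (e : ℝ) :
    HasDerivAt (fun ρ => ∫ s in a..c, (ρ - s) ^ e * G s)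
      (∫ s in a..c, e * (r - s) ^ (e - 1) * G s) r := by
  set N := Icc ((c + r) / 2) (r + 1)
  have hN : N ∈ nhds r := Icc_mem_nhds (by linarith) (by linarith)
  have hcN : ∀ ρ ∈ N, c < ρ := fun ρ hρ => by linarith [hρ.1]
  have hIoc : Ι a c ⊆ Icc a c := by rw [uIoc_of_le hac]; exact Ioc_subset_Icc_self
  obtain ⟨K, hK⟩ := (isCompact_Icc.prod (isCompact_Icc (a := a) (b := c))
    |>.exists_bound_of_continuousOn (f := fun p : ℝ × ℝ => e * (p.1 - p.2) ^ (e - 1))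
    (continuousOn_const.mul ((continuousOn_fst.sub continuousOn_snd).rpow_const
      fun p hp => Or.inl (sub_ne_zero.2 (hp.2.2.trans_lt (hcN p.1 hp.1)).ne'))))
  obtain ⟨C, hC⟩ := isCompact_Icc.exists_bound_of_continuousOn hG
  refine (intervalIntegral.hasDerivAt_integral_of_dominated_loc_of_deriv_le
    (bound := fun _ => K * C) (F' := fun ρ s => e * (ρ - s) ^ (e - 1) * G s) hN ?_ ?_ ?_ ?_
    intervalIntegrable_const ?_).2
  · filter_upwards [hN] with ρ hρ
    exact ((continuousOn_sub_rpow_mul hG (hcN ρ hρ) e).mono hIoc).aestronglyMeasurable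
      measurableSet_uIoc
  · exact (continuousOn_sub_rpow_mul hG hr e).intervalIntegrable_of_Icc hac
  · refine (ContinuousOn.mono ?_ hIoc).aestronglyMeasurable measurableSet_uIoc
    exact ((continuousOn_const (c := e)).mul (continuousOn_sub_rpow_mul hG hr (e - 1))).congr
      fun s _ => mul_assoc _ _ _
  · refine ae_of_all _ fun s hs ρ hρ => ?_
    rw [norm_mul]
    exact mul_le_mul (hK (ρ, s) ⟨hρ, hIoc hs⟩) (hC s (hIoc hs)) (norm_nonneg _)
      ((norm_nonneg _).trans (hK (ρ, s) ⟨hρ, hIoc hs⟩))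
  · refine ae_of_all _ fun s hs ρ hρ => ?_
    have hpos : ρ - s ≠ 0 := sub_ne_zero.2 ((hIoc hs).2.trans_lt (hcN ρ hρ)).ne'
    exact (((hasDerivAt_id ρ).sub_const s).rpow_const (Or.inl hpos)).mul_const (G s)
      |>.congr_deriv (by simp)

theorem integral_sub_rpow_neg_add_nat_mul_eq_zero (hac : a ≤ c) (hG : ContinuousOn G (Icc a c))
    {β : ℝ} (hβ : 0 < β) (h : ∀ r > c, ∫ s in a..c, (r - s) ^ (-β) * G s = 0) (n : ℕ) :
    ∀ r > c, ∫ s in a..c, (r - s) ^ (-(β + n)) * G s = 0 := by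
  induction n with
  | zero => simpa using h
  | succ n ih =>
    intro r hr
    have hzero : HasDerivAt (fun ρ => ∫ s in a..c, (ρ - s) ^ (-(β + n)) * G s) 0 r :=
      (hasDerivAt_const r 0).congr_of_eventuallyEq
        (Filter.eventually_of_mem (Ioi_mem_nhds hr) ih)
    have hderiv := (hasDerivAt_integral_sub_rpow_mul_s19 hac hG hr _).unique hzero
    simp_rw [mul_assoc, intervalIntegral.integral_const_mul] at hderiv
    rw [Nat.cast_succ, ← add_assoc, neg_add', ← (mul_eq_zero.1 hderiv).resolve_left ?_]
    exact neg_ne_zero.2 (by positivity)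

theorem integral_sub_rpow_mul_eq_integral_pow_mul {d β : ℝ} (hac : a ≤ c)
    (hcd : c < d) (n : ℕ) :
    ∫ s in a..c, (d - s) ^ (-(β + n)) * G s =
      ∫ y in (d - a)⁻¹..(d - c)⁻¹, y ^ n * (y ^ (β - 2) * G (d - y⁻¹)) := by
  have hle : (d - a)⁻¹ ≤ (d - c)⁻¹ := inv_anti₀ (by linarith) (by linarith)
  have hpos : ∀ y ∈ [[(d - a)⁻¹, (d - c)⁻¹]], 0 < y := fun y hy =>
    (inv_pos.2 (by linarith : 0 < d - a)).trans_le (uIcc_of_le hle ▸ hy).1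
  have hsubst := intervalIntegral.integral_comp_mul_deriv_of_deriv_nonneg
    (f := fun y => d - y⁻¹) (f' := fun y => (y ^ 2)⁻¹)
    (g := fun s => (d - s) ^ (-(β + n)) * G s) (a := (d - a)⁻¹) (b := (d - c)⁻¹)
    (continuousOn_const.sub (continuousOn_inv₀.mono fun y hy => (hpos y hy).ne'))
    (fun y hy => by
      have hy0 := hpos y (Ioo_subset_Icc_self hy)
      simpa using (hasDerivAt_inv hy0.ne').const_sub d)
    (fun y _ => by positivity)
  simp only [inv_inv, sub_sub_cancel, Function.comp] at hsubst
  rw [← hsubst]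
  refine intervalIntegral.integral_congr fun y hy => ?_
  have hy := hpos y hy
  rw [Real.inv_rpow hy.le, Real.rpow_neg hy.le, inv_inv, Real.rpow_add hy, Real.rpow_natCast,
    Real.rpow_sub hy, Real.rpow_two]
  field_simp

theorem eqOn_zero_of_forall_integral_sub_rpow_mul_eq_zero {β : ℝ} (hac : a < c)
    (hG : ContinuousOn G (Icc a c)) (hβ : 0 < β)
    (h : ∀ r > c, ∫ s in a..c, (r - s) ^ (-β) * G s = 0) : EqOn G 0 (Icc a c) := by
  set d := c + 1
  have hda : 0 < d - a := by linarith
  have hdc : 0 < d - c := by linarith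
  have hH :
      ContinuousOn (fun y => y ^ (β - 2) * G (d - y⁻¹)) (Icc (d - a)⁻¹ (d - c)⁻¹) := by
    have hpos : ∀ y ∈ Icc (d - a)⁻¹ (d - c)⁻¹, 0 < y := fun y hy =>
      (inv_pos.2 hda).trans_le hy.1
    refine (continuousOn_id.rpow_const fun y hy => Or.inl (hpos y hy).ne').mul
      (hG.comp (continuousOn_const.sub (continuousOn_inv₀.mono fun y hy => (hpos y hy).ne'))
        fun y hy => ⟨?_, ?_⟩)
    · linarith [inv_le_of_inv_le₀ hda hy.1]
    · linarith [le_inv_of_le_inv₀ (hpos y hy) hy.2]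
  have hH0 := eqOn_zero_of_forall_integral_pow_mul_eq_zero
    (inv_strictAnti₀ hdc (by linarith)) hH fun n =>
      (integral_sub_rpow_mul_eq_integral_pow_mul hac.le (lt_add_one c) n).symm.trans
        (integral_sub_rpow_neg_add_nat_mul_eq_zero hac.le hG hβ h n d (lt_add_one c))
  intro s hs
  have hds : 0 < d - s := by linarith [hs.2]
  have hHs := hH0 ⟨inv_anti₀ hds (by linarith [hs.1]), inv_anti₀ hdc (by linarith [hs.2])⟩
  simp only [Pi.zero_apply, inv_inv, sub_sub_cancel] at hHs
  exact (mul_eq_zero.1 hHs).resolve_left (Real.rpow_pos_of_pos (inv_pos.2 hds) _).ne'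

end

theorem intervalIntegrable_sub_rpow_neg_mul {β t a b C : ℝ} {g : ℝ → ℝ} (hβ : β < 1)
    (hg : AEStronglyMeasurable g (volume.restrict (Ι a b)))
    (hC : ∀ s ∈ Ι a b, ‖g s‖ ≤ C) :
    IntervalIntegrable (fun s => (t - s) ^ (-β) * g s) volume a b := by
  have hk : IntervalIntegrable (fun s => (t - s) ^ (-β)) volume a b := by
    simpa using (intervalIntegrable_rpow' (a := t - a) (b := t - b) (r := -β)
      (by linarith)).comp_sub_left t
  rw [intervalIntegrable_iff] at hk ⊢
  exact hk.mul_bdd hg ((ae_restrict_iff' measurableSet_uIoc).2 (ae_of_all _ hC))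

theorem integral_sub_rpow_mul_add_period {β S C t : ℝ} {g : ℝ → ℝ} (hβ : β < 1)
    (hg : PeriodicOnPos g S) (hgm : AEStronglyMeasurable g) (hC : ∀ s > 0, ‖g s‖ ≤ C)
    (hS : 0 ≤ S) (ht : 0 ≤ t) :
    ∫ s in 0..t + S, (t + S - s) ^ (-β) * g s =
      (∫ s in 0..S, (t + S - s) ^ (-β) * g s) + ∫ s in 0..t, (t - s) ^ (-β) * g s := by
  have hint : ∀ u v : ℝ, 0 ≤ u → 0 ≤ v →
      IntervalIntegrable (fun s => (t + S - s) ^ (-β) * g s) volume u v := fun u v hu hv =>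
    intervalIntegrable_sub_rpow_neg_mul hβ hgm.restrict
      fun s hs => hC s ((le_min hu hv).trans_lt hs.1)
  rw [← integral_add_adjacent_intervals (hint 0 S le_rfl hS) (hint S (t + S) hS (by linarith))]
  congr 1
  have hshift := integral_comp_add_right (fun s => (t + S - s) ^ (-β) * g s) S (a := 0) (b := t)
  rw [zero_add] at hshift
  rw [← hshift]
  refine integral_congr_ae (ae_of_all _ fun s hs => ?_)
  rw [uIoc_of_le ht] at hs
  rw [hg s hs.1, add_sub_add_right_eq_sub]

noncomputable def caputoDeriv (α : ℝ) (y : ℝ → ℝ) (t : ℝ) : ℝ :=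
  1 / Real.Gamma (1 - α) * ∫ s in (0 : ℝ)..t, (t - s) ^ (-α) * deriv y s

theorem PeriodicOnPos.exists_eq_const_of_caputoDeriv {α S : ℝ} {y : ℝ → ℝ} (hα0 : 0 < α)
    (hα1 : α < 1) (hS : 0 < S) (hy : ContDiffOn ℝ 1 y (Ioi 0)) (hper : PeriodicOnPos y S)
    (hD : PeriodicOnPos (caputoDeriv α y) S) : ∃ c, ∀ t > 0, y t = c := by
  set g := deriv y
  have hgc : ContinuousOn g (Ioi 0) := hy.continuousOn_deriv_of_isOpen isOpen_Ioi le_rfl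
  have hgp : PeriodicOnPos g S := hper.deriv
  obtain ⟨C, hC⟩ := hgp.exists_bound hS hgc
  have hK : PeriodicOnPos (fun t => ∫ s in (0 : ℝ)..t, (t - s) ^ (-α) * g s) S := by
    have hΓ : 1 / Real.Gamma (1 - α) ≠ 0 := by
      have := Real.Gamma_pos_of_pos (sub_pos.2 hα1)
      positivity
    exact fun t ht => mul_left_cancel₀ hΓ (hD t ht)
  set G := fun s => g (s + S)
  have hGc : ContinuousOn G (Icc 0 S) :=
    hgc.comp (by fun_prop) fun s hs => by simp only [mem_Ioi]; linarith [hs.1]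
  have hG0 : EqOn G 0 (Icc 0 S) := by
    refine eqOn_zero_of_forall_integral_sub_rpow_mul_eq_zero hS hGc hα0 fun r hr => ?_
    have hsplit := integral_sub_rpow_mul_add_period (t := r - S) hα1 hgp
      (measurable_deriv y).aestronglyMeasurable hC hS.le (by linarith)
    have hKr := hK (r - S) (by linarith)
    simp only [sub_add_cancel] at hsplit hKr
    refine (intervalIntegral.integral_congr_ae (ae_of_all _ fun s hs => ?_)).trans
      (add_eq_right.1 (hKr ▸ hsplit).symm)
    rw [uIoc_of_le hS.le] at hs
    exact congrArg _ (hgp s hs.1)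
  have hg0 : EqOn g 0 (Ioi 0) := fun t ht => by
    obtain ⟨s, hs, hts⟩ := hgp.exists_mem_Ioc_eq hS ht
    simpa [G, hts] using hG0 (⟨by linarith [hs.1], by linarith [hs.2]⟩ : s - S ∈ Icc 0 S)
  exact isOpen_Ioi.exists_is_const_of_deriv_eq_zero isPreconnected_Ioi
    (hy.differentiableOn one_ne_zero) hg0

theorem nonautonomous_fractional_system_no_periodic_solution
    (p : ℕ) (α : Fin p → ℝ) (hα0 : ∀ i, 0 < α i) (hα1 : ∀ i, α i < 1)
    (T : ℝ) (hT : 0 < T)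
    (f : ℝ → (Fin p → ℝ) → Fin p → ℝ)
    (hfper : ∀ t : ℝ, ∀ y : Fin p → ℝ, f (t + T) y = f t y)
    (k : ℕ) (hk : 0 < k)
    (x : ℝ → Fin p → ℝ)
    (hC : ∀ i, ContDiffOn ℝ 1 (fun t => x t i) (Ioi 0))
    (hsol : ∀ t > (0:ℝ), ∀ i,
      (1 / Real.Gamma (1 - α i)) *
          ∫ s in (0:ℝ)..t, (t - s) ^ (-(α i)) * deriv (fun u => x u i) s
        = f t (x t) i)
    (hper : ∀ t > (0:ℝ), x (t + (k : ℝ) * T) = x t) :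
    ∃ c : Fin p → ℝ, ∀ t > (0:ℝ), x t = c := by
  have hS : 0 < (k : ℝ) * T := mul_pos (Nat.cast_pos.2 hk) hT
  have hfS (t : ℝ) (y : Fin p → ℝ) : f (t + k * T) y = f t y :=
    (show Function.Periodic (f · y) T from fun t => hfper t y).nat_mul k t
  have hconst (i : Fin p) : ∃ c, ∀ t > 0, x t i = c := by
    refine PeriodicOnPos.exists_eq_const_of_caputoDeriv (hα0 i) (hα1 i) hS (hC i)
      (fun t ht => congrFun (hper t ht) i) fun t ht => ?_
    rw [caputoDeriv, caputoDeriv, hsol t ht i, hsol _ (by positivity) i, hper t ht, hfS]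
  choose c hc using hconst
  exact ⟨c, fun t ht => funext fun i => hc i t ht⟩
end
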